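/- arXiv:1210.7387 — 7 statements merged into one kernel-verified Lean document; each statement's English description precedes it below -/
import Mathlib

section
/- Let E be a selective ultrafilter on ω and let V_n (n ∈ ω) be selective ultrafilters on ω. Then the Fubini product V = ⊗_E V_n is basically generated by B_V: B_V is a filter base for V, and whenever a sequence ⟨b_k : k ∈ ω⟩ of elements of B_V converges to an element b ∈ B_V in the product topology on P(ω×ω) ≅ 2^(ω×ω), there exists an infinite X ⊆ ω with ⋂_{k∈X} b_k ∈ V. -/
/-- The `n`-th column of a subset of `ω × ω`. -/
def col (p : Set (ℕ × ℕ)) (n : ℕ) : Set ℕ := {m | (n, m) ∈ p}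

/-- The domain of `p`: the set of indices of nonempty columns. -/
def domp (p : Set (ℕ × ℕ)) : Set ℕ := {n | col p n ≠ ∅}

/-- The canonical base `B_V` for the Fubini product `V = ⊗_E V_n`. -/
def BV (E : Ultrafilter ℕ) (Vn : ℕ → Ultrafilter ℕ) : Set (Set (ℕ × ℕ)) :=
  {b | domp b ∈ E ∧ ∀ n ∈ domp b, col b n ∈ Vn n}

/-- An ultrafilter on `ω` is selective if it is nonprincipal and every
`f : ω → ω` is constant or injective on a member. -/
def Selective (U : Ultrafilter ℕ) : Prop :=
  (∀ s : Set ℕ, s.Finite → s ∉ U) ∧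
  ∀ f : ℕ → ℕ, ∃ a ∈ U, (∀ m ∈ a, ∀ k ∈ a, f m = f k) ∨ Set.InjOn f a

open Classical

lemma sel_infinite {U : Ultrafilter ℕ} (hU : Selective U) {s : Set ℕ} (hs : s ∈ U) :
    s.Infinite := by
  by_contra h
  exact hU.1 s (Set.not_infinite.mp h) hs

lemma sel_cofinite {U : Ultrafilter ℕ} (hU : Selective U) {s : Set ℕ} (hs : s.Finite) :
    sᶜ ∈ U :=
  Ultrafilter.compl_mem_iff_notMem.mpr (hU.1 s hs)

lemma sel_tail {U : Ultrafilter ℕ} (hU : Selective U) (B : ℕ) : {m : ℕ | B ≤ m} ∈ U := by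
  have h := sel_cofinite hU (Set.finite_Iio B)
  have : (Set.Iio B)ᶜ = {m : ℕ | B ≤ m} := by
    ext m; simp [Set.Iio]
  rwa [this] at h

lemma sel_ppoint {U : Ultrafilter ℕ} (hU : Selective U) (s : ℕ → Set ℕ) (hs : ∀ k, s k ∈ U) :
    ∃ e ∈ U, ∀ k, (e \ s k).Finite := by
  set u : ℕ → Set ℕ := fun k => (⋂ j ∈ Finset.range (k+1), s j) ∩ {m | k < m} with hu
  have hum : ∀ k, u k ∈ U := by
    intro k
    exact Filter.inter_mem ((Filter.biInter_finset_mem _).mpr (fun j _ => hs j)) (sel_tail hU (k+1))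
  have husub : ∀ k, u k ⊆ s k := by
    intro k m hm
    have := hm.1
    simp only [Set.mem_iInter] at this
    exact this k (by simp)
  have hexists : ∀ m, ∃ k, m ∉ u k := by
    intro m
    exact ⟨m, fun hm => by have := hm.2; simp at this⟩
  set ψ : ℕ → ℕ := fun m => Nat.find (hexists m) with hψ
  obtain ⟨a, haU, hcase⟩ := hU.2 ψ
  rcases hcase with hconst | hinj
  · exfalso
    obtain ⟨m₀, hm₀⟩ := Ultrafilter.nonempty_of_mem haU
    obtain ⟨m, hm⟩ := Ultrafilter.nonempty_of_mem (Filter.inter_mem haU (hum (ψ m₀)))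
    have heq : ψ m = ψ m₀ := hconst m hm.1 m₀ hm₀
    have := Nat.find_spec (hexists m)
    rw [show Nat.find (hexists m) = ψ m from rfl, heq] at this
    exact this hm.2
  · refine ⟨a, haU, fun k => ?_⟩
    have hsub : a \ s k ⊆ ⋃ j ∈ Finset.range (k+1), (a ∩ ψ ⁻¹' {j}) := by
      intro m hm
      have h1 : ψ m ≤ k := by
        by_contra h
        push_neg at h
        have hmu : m ∈ u k := by
          by_contra hmu
          have hle : ψ m ≤ k := Nat.find_le hmu
          omega
        exact hm.2 (husub k hmu)
      simp only [Set.mem_iUnion, Finset.mem_range]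
      exact ⟨ψ m, by omega, hm.1, rfl⟩
    refine Set.Finite.subset (Set.Finite.biUnion (Finset.range (k+1)).finite_toSet
      (fun j _ => ?_)) hsub
    apply Set.Subsingleton.finite
    intro x hx y hy
    exact hinj hx.1 hy.1 (hx.2.trans hy.2.symm)

lemma sel_thin {U : Ultrafilter ℕ} (hU : Selective U) (Θ : ℕ → ℕ) (hΘ : Monotone Θ)
    (e : Set ℕ) (he : e ∈ U) :
    ∃ e' ∈ U, e' ⊆ e ∧ ∀ m ∈ e', ∀ m' ∈ e', m < m' → Θ m ≤ m' := by
  obtain ⟨t, ht0, htS⟩ : ∃ t : ℕ → ℕ, t 0 = 0 ∧ ∀ j, t (j+1) = Θ (t j) + t j + 1 :=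
    ⟨fun j => Nat.rec 0 (fun _ ih => Θ ih + ih + 1) j, rfl, fun j => rfl⟩
  have htmono : Monotone t := monotone_nat_of_le_succ (fun j => by rw [htS]; omega)
  have htj : ∀ j, j ≤ t j := by
    intro j
    induction j with
    | zero => omega
    | succ j ih => rw [htS]; omega
  have hex : ∀ m, ∃ j, m < t (j+1) := by
    intro m
    exact ⟨m, by have := htj (m+1); omega⟩
  set φ : ℕ → ℕ := fun m => Nat.find (hex m) with hφ
  have hφub : ∀ m, m < t (φ m + 1) := fun m => Nat.find_spec (hex m)
  have hφlb : ∀ m, t (φ m) ≤ m := by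
    intro m
    rcases Nat.eq_zero_or_pos (φ m) with h0 | hpos
    · rw [h0, ht0]; omega
    · obtain ⟨j, hj⟩ : ∃ j, φ m = j + 1 := ⟨φ m - 1, by omega⟩
      have := Nat.find_min (hex m) (show j < φ m by omega)
      rw [hj]; omega
  have hφmono : Monotone φ := by
    intro m m' hmm'
    exact Nat.find_mono (fun j h => by omega)
  have hkey : ∀ m m', φ m + 2 ≤ φ m' → Θ m ≤ m' := by
    intro m m' h
    have h1 : Θ m ≤ Θ (t (φ m + 1)) := hΘ (le_of_lt (hφub m))
    have h2 : t (φ m + 2) = Θ (t (φ m + 1)) + t (φ m + 1) + 1 := htS _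
    have h3 : t (φ m + 2) ≤ t (φ m') := htmono h
    have h4 : t (φ m') ≤ m' := hφlb m'
    omega
  obtain ⟨a, haU, hcase⟩ := hU.2 φ
  rcases hcase with hconst | hinj
  · exfalso
    obtain ⟨m₀, hm₀⟩ := Ultrafilter.nonempty_of_mem haU
    have hfin : a.Finite := by
      apply Set.Finite.subset (Set.finite_Iio (t (φ m₀ + 1)))
      intro m hm
      have heq : φ m = φ m₀ := hconst m hm m₀ hm₀
      have hub := hφub m
      rw [heq] at hub
      exact hub
    exact hU.1 a hfin haU
  · rcases Ultrafilter.mem_or_compl_mem U {m | φ m % 2 = 0} with hP | hP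
    · refine ⟨e ∩ a ∩ {m | φ m % 2 = 0}, Filter.inter_mem (Filter.inter_mem he haU) hP,
        fun m hm => hm.1.1, ?_⟩
      intro m hm m' hm' hlt
      have hne : φ m ≠ φ m' := fun h => by have := hinj hm.1.2 hm'.1.2 h; omega
      have hle : φ m ≤ φ m' := hφmono (le_of_lt hlt)
      have hp1 : φ m % 2 = 0 := hm.2
      have hp2 : φ m' % 2 = 0 := hm'.2
      exact hkey m m' (by omega)
    · refine ⟨e ∩ a ∩ {m | φ m % 2 = 0}ᶜ, Filter.inter_mem (Filter.inter_mem he haU) hP,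
        fun m hm => hm.1.1, ?_⟩
      intro m hm m' hm' hlt
      have hne : φ m ≠ φ m' := fun h => by have := hinj hm.1.2 hm'.1.2 h; omega
      have hle : φ m ≤ φ m' := hφmono (le_of_lt hlt)
      have hp1 : ¬ (φ m % 2 = 0) := hm.2
      have hp2 : ¬ (φ m' % 2 = 0) := hm'.2
      exact hkey m m' (by omega)

noncomputable def nextC (C : Set ℕ) (x : ℕ) : ℕ := sInf {c | c ∈ C ∧ x ≤ c}

lemma nextC_spec {C : Set ℕ} (hC : C.Infinite) (x : ℕ) :
    nextC C x ∈ C ∧ x ≤ nextC C x := by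
  have hne : {c | c ∈ C ∧ x ≤ c}.Nonempty := by
    obtain ⟨c, hc, hxc⟩ := hC.exists_gt x
    exact ⟨c, hc, hxc.le⟩
  exact Nat.sInf_mem hne

lemma nextC_le {C : Set ℕ} {x y : ℕ} (hy : y ∈ C) (hxy : x ≤ y) : nextC C x ≤ y :=
  Nat.sInf_le ⟨hy, hxy⟩

/-- A Fubini product of selective ultrafilters is basically generated by `B_V`:
`B_V` is a filter base for it, and every sequence from `B_V` converging (in the
product topology on `P(ω×ω)`) to a member of `B_V` has an infinite subsequence
whose intersection is in the ultrafilter. -/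
theorem fubini_basically_generated (E : Ultrafilter ℕ) (Vn : ℕ → Ultrafilter ℕ)
    (hE : Selective E) (hVn : ∀ n, Selective (Vn n))
    (V : Ultrafilter (ℕ × ℕ))
    (hV : ∀ a : Set (ℕ × ℕ), a ∈ V ↔ {n | col a n ∈ Vn n} ∈ E) :
    ((∀ b ∈ BV E Vn, b ∈ V) ∧
      (∀ a ∈ V, ∃ b ∈ BV E Vn, b ⊆ a) ∧
      (∀ b₀ ∈ BV E Vn, ∀ b₁ ∈ BV E Vn, b₀ ∩ b₁ ∈ BV E Vn)) ∧
    (∀ b : ℕ → Set (ℕ × ℕ), ∀ binf ∈ BV E Vn, (∀ k, b k ∈ BV E Vn) →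
      (∀ x : ℕ × ℕ, ∃ N, ∀ k ≥ N, (x ∈ b k ↔ x ∈ binf)) →
      ∃ X : Set ℕ, X.Infinite ∧ (⋂ k ∈ X, b k) ∈ V) := by
  constructor
  · -- B_V is a filter base
    refine ⟨fun b hb => ?_, fun a ha => ?_, fun b₀ hb₀ b₁ hb₁ => ?_⟩
    · exact (hV b).mpr (Filter.mem_of_superset hb.1 (fun n hn => hb.2 n hn))
    · refine ⟨{p | p ∈ a ∧ col a p.1 ∈ Vn p.1}, ⟨?_, ?_⟩, fun p hp => hp.1⟩
      · have hS : {n | col a n ∈ Vn n} ∈ E := (hV a).mp ha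
        apply Filter.mem_of_superset hS
        intro n hn
        obtain ⟨m, hm⟩ := Ultrafilter.nonempty_of_mem hn
        show col _ n ≠ ∅
        apply Set.nonempty_iff_ne_empty.mp
        exact ⟨m, hm, hn⟩
      · intro n hn
        obtain ⟨m, hm⟩ := Set.nonempty_iff_ne_empty.mpr hn
        have hcol : col a n ∈ Vn n := hm.2
        have hceq : col {p : ℕ × ℕ | p ∈ a ∧ col a p.1 ∈ Vn p.1} n = col a n := by
          ext m'
          simp only [col, Set.mem_setOf_eq]
          exact ⟨fun h => h.1, fun h => ⟨h, hcol⟩⟩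
        rw [hceq]
        exact hcol
    · constructor
      · apply Filter.mem_of_superset (Filter.inter_mem hb₀.1 hb₁.1)
        intro n hn
        have hmem : col b₀ n ∩ col b₁ n ∈ Vn n := Filter.inter_mem (hb₀.2 n hn.1) (hb₁.2 n hn.2)
        show col (b₀ ∩ b₁) n ≠ ∅
        have hcol : col (b₀ ∩ b₁) n = col b₀ n ∩ col b₁ n := rfl
        rw [hcol]
        exact Set.nonempty_iff_ne_empty.mp (Ultrafilter.nonempty_of_mem hmem)
      · intro n hn
        have hsub0 : col (b₀ ∩ b₁) n ⊆ col b₀ n := fun m hm => hm.1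
        have hsub1 : col (b₀ ∩ b₁) n ⊆ col b₁ n := fun m hm => hm.2
        have h0 : n ∈ domp b₀ := fun h => hn (Set.subset_empty_iff.mp (h ▸ hsub0))
        have h1 : n ∈ domp b₁ := fun h => hn (Set.subset_empty_iff.mp (h ▸ hsub1))
        have hcol : col (b₀ ∩ b₁) n = col b₀ n ∩ col b₁ n := rfl
        rw [hcol]
        exact Filter.inter_mem (hb₀.2 n h0) (hb₁.2 n h1)
  · -- basically generated
    intro b binf hbinf hb hconv
    classical
    choose f hf using hconv
    -- Top-level P-point: A₀
    obtain ⟨A₀', hA₀'E, hA₀'fin⟩ := sel_ppoint hE (fun k => domp (b k) ∩ domp binf)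
        (fun k => Filter.inter_mem (hb k).1 hbinf.1)
    set A₀ : Set ℕ := A₀' ∩ domp binf with hA₀def
    have hA₀E : A₀ ∈ E := Filter.inter_mem hA₀'E hbinf.1
    have hA₀D : A₀ ⊆ domp binf := fun n hn => hn.2
    have hA₀fin : ∀ k, (A₀ \ domp (b k)).Finite := by
      intro k
      apply (hA₀'fin k).subset
      intro n hn
      exact ⟨hn.1.1, fun h => hn.2 h.1⟩
    -- H : rate of domp inclusion
    have hHex : ∀ k : ℕ, ∃ B : ℕ, ∀ n ∈ A₀, B ≤ n → n ∈ domp (b k) := by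
      intro k
      obtain ⟨B, hB⟩ := (hA₀fin k).bddAbove
      refine ⟨B + 1, fun n hn hBn => ?_⟩
      by_contra h
      have := hB (⟨hn, h⟩ : n ∈ A₀ \ domp (b k))
      omega
    choose H hH using hHex
    -- per-column P-point data: e, g
    have hedata : ∀ n : ℕ, ∃ (en : Set ℕ) (gn : ℕ → ℕ), n ∈ A₀ →
        en ∈ Vn n ∧ en ⊆ col binf n ∧
        ∀ k m, m ∈ en → gn k ≤ m → n ∈ domp (b k) → (n, m) ∈ b k := by
      intro n
      by_cases hn : n ∈ A₀
      · have hcoln : col binf n ∈ Vn n := hbinf.2 n (hA₀D hn)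
        set s : ℕ → Set ℕ := fun k =>
          if n ∈ domp (b k) then col (b k) n ∩ col binf n else col binf n with hs
        have hsV : ∀ k, s k ∈ Vn n := by
          intro k
          rw [hs]
          dsimp only
          split
          · exact Filter.inter_mem ((hb k).2 n ‹_›) hcoln
          · exact hcoln
        obtain ⟨e₀, he₀, he₀fin⟩ := sel_ppoint (hVn n) s hsV
        have hgex : ∀ k : ℕ, ∃ B : ℕ, ∀ m, m ∈ e₀ ∩ col binf n → B ≤ m → m ∈ s k := by
          intro k
          obtain ⟨B, hB⟩ := ((he₀fin k).subset
            (fun m (hm : m ∈ (e₀ ∩ col binf n) \ s k) => (⟨hm.1.1, hm.2⟩ : m ∈ e₀ \ s k))).bddAbove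
          refine ⟨B + 1, fun m hm hBm => ?_⟩
          by_contra h
          have := hB (⟨hm, h⟩ : m ∈ (e₀ ∩ col binf n) \ s k)
          omega
        choose gn hgn using hgex
        refine ⟨e₀ ∩ col binf n, gn, fun _ =>
          ⟨Filter.inter_mem he₀ hcoln, fun m hm => hm.2, ?_⟩⟩
        intro k m hm hgm hdk
        have hms := hgn k m hm hgm
        rw [hs] at hms
        simp only [if_pos hdk] at hms
        exact hms.1
      · exact ⟨∅, fun _ => 0, fun h => absurd h hn⟩
    choose e g he using hedata
    -- h : rate at which columns become nonempty
    have hhex : ∀ n : ℕ, ∃ hn : ℕ, n ∈ A₀ → ∀ t, hn ≤ t → n ∈ domp (b t) := by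
      intro n
      by_cases hn : n ∈ A₀
      · obtain ⟨m₀, hm₀⟩ := Set.nonempty_iff_ne_empty.mpr (hA₀D hn)
        refine ⟨f (n, m₀), fun _ t ht => ?_⟩
        have hbt : (n, m₀) ∈ b t := (hf (n, m₀) t ht).mpr hm₀
        show col (b t) n ≠ ∅
        exact Set.nonempty_iff_ne_empty.mp ⟨m₀, hbt⟩
      · exact ⟨0, fun h => absurd h hn⟩
    choose h hh using hhex
    -- monotonized versions
    set gbar : ℕ → ℕ → ℕ := fun n t =>
      Finset.sup (Finset.range (n+1) ×ˢ Finset.range (t+1)) (fun p => g p.1 p.2) with hgbar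
    have hgbar_ge : ∀ n' t' n t, n' ≤ n → t' ≤ t → g n' t' ≤ gbar n t := by
      intro n' t' n t h1 h2
      have hmem : (n', t') ∈ Finset.range (n+1) ×ˢ Finset.range (t+1) := by
        simp only [Finset.mem_product, Finset.mem_range]
        omega
      exact Finset.le_sup (f := fun p : ℕ × ℕ => g p.1 p.2) hmem
    have hgbar_mono : ∀ n t t', t ≤ t' → gbar n t ≤ gbar n t' := by
      intro n t t' htt'
      apply Finset.sup_mono
      apply Finset.product_subset_product_right
      intro x hx
      simp only [Finset.mem_range] at *
      omega
    set hbar : ℕ → ℕ := fun ν => Finset.sup (Finset.range (ν+1)) h with hhbar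
    have hhbar_ge : ∀ n ν, n ≤ ν → h n ≤ hbar ν := by
      intro n ν hnν
      apply Finset.le_sup
      simp only [Finset.mem_range]
      omega
    have hhbar_mono : Monotone hbar := by
      intro ν ν' hνν'
      apply Finset.sup_mono
      intro x hx
      simp only [Finset.mem_range] at *
      omega
    set F : ℕ → ℕ → ℕ := fun n m =>
      max m (Finset.sup (Finset.range (m+1)) (fun m' => f (n, m'))) with hFdef
    have hF_ge : ∀ n m' m, m' ≤ m → f (n, m') ≤ F n m := by
      intro n m' m hm
      apply le_max_of_le_right
      apply Finset.le_sup (f := fun m' => f (n, m'))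
      simp only [Finset.mem_range]
      omega
    have hF_self : ∀ n m, m ≤ F n m := fun n m => le_max_left _ _
    have hF_mono : ∀ n, Monotone (F n) := by
      intro n m m' hmm'
      apply max_le_max hmm'
      apply Finset.sup_mono
      intro x hx
      simp only [Finset.mem_range] at *
      omega
    -- the chain construction
    have hstep : ∀ (ν : ℕ) (C : {C : Set ℕ // C.Infinite}),
        ∃ (e' : Set ℕ) (C' : {C : Set ℕ // C.Infinite}), C'.1 ⊆ C.1 ∧
          (ν ∈ A₀ → e' ∈ Vn ν ∧ e' ⊆ e ν ∧
            ∀ c ∈ C'.1, ∀ m ∈ e', ¬ (f (ν, m) ≤ c) → gbar ν c ≤ m) := by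
      intro ν C
      by_cases hν : ν ∈ A₀
      · obtain ⟨heV, heSub, hprop⟩ := he ν hν
        have hΘmono : Monotone (fun m => gbar ν (nextC C.1 (F ν m))) := by
          intro m m' hmm'
          apply hgbar_mono
          exact nextC_le (nextC_spec C.2 (F ν m')).1
            (le_trans (hF_mono ν hmm') (nextC_spec C.2 (F ν m')).2)
        obtain ⟨e', he'V, he'sub, he'thin⟩ := sel_thin (hVn ν) _ hΘmono (e ν) heV
        refine ⟨e', ⟨(fun m => nextC C.1 (F ν m)) '' e', ?_⟩, ?_, fun _ => ⟨he'V, he'sub, ?_⟩⟩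
        · -- infinite
          intro hfin
          obtain ⟨B, hB⟩ := hfin.bddAbove
          obtain ⟨m, hm, hBm⟩ := (sel_infinite (hVn ν) he'V).exists_gt B
          have h1 : nextC C.1 (F ν m) ≤ B := hB ⟨m, hm, rfl⟩
          have h2 : F ν m ≤ nextC C.1 (F ν m) := (nextC_spec C.2 (F ν m)).2
          have h3 : m ≤ F ν m := hF_self ν m
          omega
        · rintro c ⟨m, hm, rfl⟩
          exact (nextC_spec C.2 (F ν m)).1
        · rintro c ⟨mt, hmt, rfl⟩ m hm hfc
          push_neg at hfc
          have hmm : mt < m := by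
            by_contra hle
            push_neg at hle
            exact absurd (le_trans (hF_ge ν m mt hle) (nextC_spec C.2 (F ν mt)).2)
              (not_le.mpr hfc)
          exact he'thin mt hmt m hm hmm
      · exact ⟨∅, C, subset_rfl, fun hc => absurd hc hν⟩
    choose e'f C'f hC'sub hC'prop using hstep
    obtain ⟨chain, hchain0, hchainS⟩ : ∃ ch : ℕ → {C : Set ℕ // C.Infinite},
        ch 0 = ⟨Set.univ, Set.infinite_univ⟩ ∧ ∀ ν, ch (ν+1) = C'f ν (ch ν) :=
      ⟨fun ν => Nat.rec ⟨Set.univ, Set.infinite_univ⟩ (fun ν ih => C'f ν ih) ν,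
        rfl, fun ν => rfl⟩
    set e' : ℕ → Set ℕ := fun ν => e'f ν (chain ν) with he'def
    have hchain_anti : ∀ ν ν', ν ≤ ν' → (chain ν').1 ⊆ (chain ν).1 := by
      intro ν ν' hνν'
      induction ν', hνν' using Nat.le_induction with
      | base => exact subset_rfl
      | succ ν' hle ih =>
        rw [hchainS ν']
        exact (hC'sub ν' (chain ν')).trans ih
    have hclean : ∀ ν ∈ A₀, ∀ c ∈ (chain (ν+1)).1, ∀ m ∈ e' ν,
        ¬ (f (ν, m) ≤ c) → gbar ν c ≤ m := by
      intro ν hν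
      rw [hchainS ν]
      exact (hC'prop ν (chain ν) hν).2.2
    have he'V : ∀ ν ∈ A₀, e' ν ∈ Vn ν := fun ν hν => (hC'prop ν (chain ν) hν).1
    have he'sub : ∀ ν ∈ A₀, e' ν ⊆ e ν := fun ν hν => (hC'prop ν (chain ν) hν).2.1
    -- T
    set T : ℕ → ℕ := fun ν => nextC (chain (ν+1)).1 (max ν (hbar ν)) with hTdef
    have hTmem : ∀ ν, T ν ∈ (chain (ν+1)).1 := fun ν => (nextC_spec (chain (ν+1)).2 _).1
    have hTge : ∀ ν, max ν (hbar ν) ≤ T ν := fun ν => (nextC_spec (chain (ν+1)).2 _).2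
    have hTmono : Monotone T := by
      intro ν ν' hνν'
      exact nextC_le (hchain_anti (ν+1) (ν'+1) (by omega) (hTmem ν'))
        (le_trans (max_le_max hνν' (hhbar_mono hνν')) (hTge ν'))
    -- top-level thinness
    set Hhat : ℕ → ℕ := fun t => Finset.sup (Finset.range (t+1)) H with hHhat
    have hHhat_ge : ∀ t' t, t' ≤ t → H t' ≤ Hhat t := by
      intro t' t htt'
      apply Finset.le_sup
      simp only [Finset.mem_range]
      omega
    have hΘtop_mono : Monotone (fun n => max (Hhat (T n)) (T n + 1)) := by
      intro n n' hnn'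
      have h1 : T n ≤ T n' := hTmono hnn'
      have h2 : Hhat (T n) ≤ Hhat (T n') := by
        apply Finset.sup_mono
        intro x hx
        simp only [Finset.mem_range] at *
        omega
      exact max_le_max h2 (by omega)
    obtain ⟨A₁, hA₁E, hA₁sub, hA₁thin⟩ := sel_thin hE _ hΘtop_mono A₀ hA₀E
    -- final set
    refine ⟨T '' A₁, ?_, ?_⟩
    · -- infinite
      apply Set.Infinite.image ?_ (sel_infinite hE hA₁E)
      intro n hn n' hn' hTeq
      by_contra hne
      rcases Nat.lt_or_ge n n' with hlt | hge
      · have := hA₁thin n hn n' hn' hlt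
        have h2 : n' ≤ T n' := le_trans (le_max_left _ _) (hTge n')
        omega
      · have hlt : n' < n := by omega
        have := hA₁thin n' hn' n hn hlt
        have h2 : n ≤ T n := le_trans (le_max_left _ _) (hTge n)
        omega
    · set W : Set (ℕ × ℕ) :=
        {p | p.1 ∈ A₁ ∧ p.2 ∈ e' p.1 ∧ gbar p.1 (T p.1) ≤ p.2} with hWdef
      have hWV : W ∈ V := by
        apply (hV W).mpr
        apply Filter.mem_of_superset hA₁E
        intro n hn
        have hceq : col W n = e' n ∩ {m | gbar n (T n) ≤ m} := by
          ext m
          simp only [col, W, Set.mem_setOf_eq, Set.mem_inter_iff]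
          exact ⟨fun hx => ⟨hx.2.1, hx.2.2⟩, fun hx => ⟨hn, hx.1, hx.2⟩⟩
        show col W n ∈ Vn n
        rw [hceq]
        exact Filter.inter_mem (he'V n (hA₁sub hn)) (sel_tail (hVn n) _)
      apply Filter.mem_of_superset hWV
      intro p hp
      simp only [Set.mem_iInter]
      rintro t ⟨n', hn', rfl⟩
      obtain ⟨n, m⟩ := p
      obtain ⟨hpA, hpe, hpB⟩ := hp
      simp only at hpA hpe hpB
      have hnA₀ : n ∈ A₀ := hA₁sub hpA
      by_cases hfc : f (n, m) ≤ T n'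
      · apply (hf (n, m) (T n') hfc).mpr
        exact (he n hnA₀).2.1 (he'sub n hnA₀ hpe)
      · have hgm : g n (T n') ≤ m := by
          rcases le_or_gt n' n with hle | hlt
          · have h1 : g n (T n') ≤ gbar n (T n) :=
              hgbar_ge n (T n') n (T n) le_rfl (hTmono hle)
            omega
          · have hTc : T n' ∈ (chain (n+1)).1 :=
              hchain_anti (n+1) (n'+1) (by omega) (hTmem n')
            have h1 := hclean n hnA₀ (T n') hTc m hpe hfc
            have h2 : g n (T n') ≤ gbar n (T n') :=
              hgbar_ge n (T n') n (T n') le_rfl le_rfl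
            omega
        have hdomp : n ∈ domp (b (T n')) := by
          rcases le_or_gt n n' with hle | hlt
          · apply hh n hnA₀ (T n')
            have h1 : h n ≤ hbar n' := hhbar_ge n n' hle
            have h2 : hbar n' ≤ T n' := le_trans (le_max_right _ _) (hTge n')
            omega
          · have hthin := hA₁thin n' hn' n hpA hlt
            apply hH (T n') n hnA₀
            have h1 : H (T n') ≤ Hhat (T n') := hHhat_ge (T n') (T n') le_rfl
            have h2 : Hhat (T n') ≤ max (Hhat (T n')) (T n' + 1) := le_max_left _ _
            omega
        exact (he n hnA₀).2.2 (T n') m (he'sub n hnA₀ hpe) hgm hdomp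
end

section
/- Let U be an ultrafilter on ω that is basically generated by a filter base B ⊆ U. Let φ : B → P(ω) be a monotone map such that φ(b) ≠ ∅ for every b ∈ B. Define ψ : P(ω) → P(ω) by ψ(a) = ⋂{φ(b) : b ∈ B and a ⊆ b}. Then for every b ∈ B, the union ⋃_{s ∈ [b]^{<ω}} ψ(s) over all finite subsets s of b is nonempty. -/
/-- Lemma 16 of Dobrinen–Todorcevic: if `U` is basically generated by `B` and
`φ : B → P(ω)` is monotone and non-zero, then for the map
`ψ(a) = ⋂ {φ(b) : b ∈ B, a ⊆ b}` and every `b ∈ B`, the union of `ψ(s)` over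
finite subsets `s` of `b` is nonempty. -/
theorem union_psi_nonempty (U : Ultrafilter ℕ) (B : Set (Set ℕ))
    (hBU : ∀ b ∈ B, b ∈ U)
    (hbase : ∀ a ∈ U, ∃ b ∈ B, b ⊆ a)
    (hcap : ∀ b₀ ∈ B, ∀ b₁ ∈ B, b₀ ∩ b₁ ∈ B)
    (hbg : ∀ b : ℕ → Set ℕ, ∀ binf ∈ B, (∀ n, b n ∈ B) →
      (∀ x : ℕ, ∃ N, ∀ n ≥ N, (x ∈ b n ↔ x ∈ binf)) →
      ∃ X : Set ℕ, X.Infinite ∧ (⋂ n ∈ X, b n) ∈ U)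
    (φ : Set ℕ → Set ℕ)
    (hmono : ∀ a ∈ B, ∀ b ∈ B, a ⊆ b → φ a ⊆ φ b)
    (hnz : ∀ b ∈ B, φ b ≠ ∅)
    (ψ : Set ℕ → Set ℕ)
    (hψ : ∀ a : Set ℕ, ψ a = {k | ∀ b ∈ B, a ⊆ b → k ∈ φ b}) :
    ∀ b ∈ B, (⋃ s ∈ {s : Set ℕ | s.Finite ∧ s ⊆ b}, ψ s).Nonempty := by
  intro b hb
  by_contra hne
  rw [Set.not_nonempty_iff_eq_empty] at hne
  -- For every n and k there is c ∈ B with b ∩ [0,n) ⊆ c and k ∉ φ c.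
  have hstep : ∀ n k : ℕ, ∃ c, c ∈ B ∧ (b ∩ Set.Iio n) ⊆ c ∧ k ∉ φ c := by
    intro n k
    have hsfin : (b ∩ Set.Iio n).Finite := (Set.finite_Iio n).inter_of_right _
    have hsub : b ∩ Set.Iio n ⊆ b := Set.inter_subset_left
    have hk : k ∉ ψ (b ∩ Set.Iio n) := by
      intro hk
      have : k ∈ ⋃ s ∈ {s : Set ℕ | s.Finite ∧ s ⊆ b}, ψ s :=
        Set.mem_biUnion ⟨hsfin, hsub⟩ hk
      rw [hne] at this
      exact this
    rw [hψ] at hk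
    simp only [Set.mem_setOf_eq] at hk
    push_neg at hk
    obtain ⟨c, hcB, hsc, hkc⟩ := hk
    exact ⟨c, hcB, hsc, hkc⟩
  choose c' hc'B hc'sub hc'k using hstep
  -- Intersect the first n+1 witnesses with b.
  let d : ℕ → ℕ → Set ℕ := fun n j =>
    Nat.rec (b ∩ c' n 0) (fun j dj => dj ∩ c' n (j + 1)) j
  have hd : ∀ n j, d n j ∈ B ∧ d n j ⊆ b ∧ (b ∩ Set.Iio n) ⊆ d n j ∧
      (∀ k ≤ j, d n j ⊆ c' n k) := by
    intro n j
    induction j with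
    | zero =>
      refine ⟨hcap b hb _ (hc'B n 0), Set.inter_subset_left,
        Set.subset_inter Set.inter_subset_left (hc'sub n 0), ?_⟩
      intro k hk
      interval_cases k
      exact Set.inter_subset_right
    | succ j ih =>
      refine ⟨hcap _ ih.1 _ (hc'B n (j + 1)), fun x hx => ih.2.1 hx.1,
        Set.subset_inter ih.2.2.1 (hc'sub n (j + 1)), ?_⟩
      intro k hk
      rcases Nat.le_succ_iff.mp hk with h1 | h1
      · exact fun x hx => ih.2.2.2 k h1 hx.1
      · subst h1
        exact Set.inter_subset_right
  set c : ℕ → Set ℕ := fun n => d n n with hc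
  have hcB : ∀ n, c n ∈ B := fun n => (hd n n).1
  have hcb : ∀ n, c n ⊆ b := fun n => (hd n n).2.1
  have hsn : ∀ n, (b ∩ Set.Iio n) ⊆ c n := fun n => (hd n n).2.2.1
  have hck : ∀ n k, k ≤ n → c n ⊆ c' n k := fun n k hk => (hd n n).2.2.2 k hk
  -- The sequence c converges to b.
  have hconv : ∀ x : ℕ, ∃ N, ∀ n ≥ N, (x ∈ c n ↔ x ∈ b) := by
    intro x
    refine ⟨x + 1, fun n hn => ⟨fun hx => hcb n hx, fun hx => ?_⟩⟩
    exact hsn n ⟨hx, Nat.lt_of_lt_of_le (Nat.lt_succ_self x) hn⟩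
  obtain ⟨X, hXinf, hXU⟩ := hbg c b hb hcB hconv
  obtain ⟨b', hb'B, hb'sub⟩ := hbase _ hXU
  obtain ⟨k, hk⟩ := Set.nonempty_iff_ne_empty.mpr (hnz b' hb'B)
  obtain ⟨n, hnX, hkn⟩ := hXinf.exists_gt k
  have hb'c : b' ⊆ c n := by
    intro x hx
    have := hb'sub hx
    simp only [Set.mem_iInter] at this
    exact this n hnX
  have : k ∈ φ (c' n k) :=
    hmono _ (hcB n) _ (hc'B n k) (hck n k hkn.le)
      (hmono _ hb'B _ (hcB n) hb'c hk)
  exact hc'k n k this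
end

section
/- Let U be a nonprincipal ultrafilter on ω×ω and let A ⊆ [ω×ω]^{<ω} with ∅ ∉ A be such that for every a ∈ U, A ∩ [a]^{<ω} ≠ ∅. Let P be the set of elements of A that are minimal in A with respect to ⊆. Then for every a ∈ U, the union ⋃(P ∩ [a]^{<ω}) of all members of P that are subsets of a belongs to U; consequently, for every a ∈ U the set P ∩ [a]^{<ω} is infinite. -/
/-- Let `U` be a nonprincipal ultrafilter on `ω×ω` and `A` a family of nonempty
finite sets meeting `[a]^{<ω}` for every `a ∈ U`. Let `P` be the set of
`⊆`-minimal members of `A`. Then for every `a ∈ U` the union of the members of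
`P` included in `a` belongs to `U`, and `P ∩ [a]^{<ω}` is infinite. -/
theorem minimal_family_union_mem (U : Ultrafilter (ℕ × ℕ))
    (hUnp : ∀ s : Set (ℕ × ℕ), s.Finite → s ∉ U)
    (A : Set (Set (ℕ × ℕ))) (hAfin : ∀ s ∈ A, s.Finite) (hA0 : ∅ ∉ A)
    (hAmeet : ∀ a ∈ U, ∃ s ∈ A, s ⊆ a)
    (P : Set (Set (ℕ × ℕ)))
    (hP : P = {s ∈ A | ∀ t ∈ A, t ⊆ s → t = s}) :
    (∀ a ∈ U, ⋃₀ {s ∈ P | s ⊆ a} ∈ U) ∧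
    (∀ a ∈ U, {s ∈ P | s ⊆ a}.Infinite) := by
  classical
  have hmin : ∀ s ∈ A, ∃ t, t ∈ A ∧ t ⊆ s ∧ ∀ u ∈ A, u ⊆ t → u = t := by
    intro s hs
    have hN : ∃ n, ∃ t, t ∈ A ∧ t ⊆ s ∧ t.ncard = n := ⟨s.ncard, s, hs, subset_rfl, rfl⟩
    obtain ⟨t, ht, hts, hcard⟩ := Nat.find_spec hN
    refine ⟨t, ht, hts, fun u hu hut => ?_⟩
    have h1 : u.ncard ≤ t.ncard := Set.ncard_le_ncard hut (hAfin t ht)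
    have h2 : Nat.find hN ≤ u.ncard := Nat.find_le ⟨u, hu, hut.trans hts, rfl⟩
    exact Set.eq_of_subset_of_ncard_le hut (by omega) (hAfin t ht)
  have key : ∀ a ∈ U, ⋃₀ {s ∈ P | s ⊆ a} ∈ U := by
    intro a ha
    by_contra h
    have hc : (⋃₀ {s ∈ P | s ⊆ a})ᶜ ∈ U := Ultrafilter.compl_mem_iff_notMem.mpr h
    have hia : a ∩ (⋃₀ {s ∈ P | s ⊆ a})ᶜ ∈ U := Filter.inter_mem ha hc
    obtain ⟨s, hsA, hsub⟩ := hAmeet _ hia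
    obtain ⟨t, htA, hts, htmin⟩ := hmin s hsA
    have htne : t.Nonempty := by
      rcases Set.eq_empty_or_nonempty t with h0 | h0
      · exact absurd (h0 ▸ htA) hA0
      · exact h0
    obtain ⟨x, hx⟩ := htne
    have hxa : x ∈ a ∩ (⋃₀ {s ∈ P | s ⊆ a})ᶜ := hsub (hts hx)
    have htP : t ∈ {s ∈ P | s ⊆ a} := by
      refine ⟨by rw [hP]; exact ⟨htA, htmin⟩, fun y hy => (hsub (hts hy)).1⟩
    exact hxa.2 ⟨t, htP, hx⟩
  refine ⟨key, fun a ha h => ?_⟩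
  have hfin : (⋃₀ {s ∈ P | s ⊆ a}).Finite :=
    Set.Finite.sUnion h (fun s hs => hAfin s (by rw [hP] at hs; exact hs.1.1))
  exact hUnp _ hfin (key a ha)
end

section
/- Let U be a nonprincipal ultrafilter on ω×ω and let P ⊆ [ω×ω]^{<ω} \ {∅} be such that for every a ∈ U, the union ⋃(P ∩ [a]^{<ω}) belongs to U. Then the map χ : U → U(P) defined by χ(a) = P ∩ [a]^{<ω} is monotone with range cofinal in U(P) (ordered by ⊇), and χ maps every subset of U unbounded in (U, ⊇) to a subset unbounded in (U(P), ⊇); consequently U(P) ≡_T U. -/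
/-- The filter `U(P)` on `P` induced by an ultrafilter `U` on `ω×ω`. -/
def UP (U : Ultrafilter (ℕ × ℕ)) (P : Set (Set (ℕ × ℕ))) : Set (Set (Set (ℕ × ℕ))) :=
  {A | A ⊆ P ∧ ∃ a ∈ U, {s ∈ P | s.Finite ∧ s ⊆ a} ⊆ A}

/-- The map `χ(a) = P ∩ [a]^{<ω}`. -/
def chiMap (P : Set (Set (ℕ × ℕ))) (a : Set (ℕ × ℕ)) : Set (Set (ℕ × ℕ)) :=
  {s ∈ P | s.Finite ∧ s ⊆ a}

/-- A subset `X` of the ultrafilter `U` is unbounded in `(U, ⊇)`. -/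
def UnbddU (U : Ultrafilter (ℕ × ℕ)) (X : Set (Set (ℕ × ℕ))) : Prop :=
  ¬ ∃ b ∈ U, ∀ a ∈ X, b ⊆ a

/-- A subset `Y` of `U(P)` is unbounded in `(U(P), ⊇)`. -/
def UnbddUP (W : Set (Set (Set (ℕ × ℕ)))) (Y : Set (Set (Set (ℕ × ℕ)))) : Prop :=
  ¬ ∃ B ∈ W, ∀ A ∈ Y, B ⊆ A

/-- If `⋃(P ∩ [a]^{<ω}) ∈ U` for every `a ∈ U`, then `χ : U → U(P)`,
`χ(a) = P ∩ [a]^{<ω}`, is monotone with cofinal range, maps unbounded sets to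
unbounded sets, and consequently `U(P) ≡_T U`. -/
theorem UP_tukey_equiv (U : Ultrafilter (ℕ × ℕ))
    (hUnp : ∀ s : Set (ℕ × ℕ), s.Finite → s ∉ U)
    (P : Set (Set (ℕ × ℕ))) (hPfin : ∀ s ∈ P, s.Finite) (hP0 : ∅ ∉ P)
    (hunion : ∀ a ∈ U, ⋃₀ {s ∈ P | s.Finite ∧ s ⊆ a} ∈ U) :
    (∀ a ∈ U, ∀ b ∈ U, a ⊆ b → chiMap P a ⊆ chiMap P b) ∧
    (∀ a ∈ U, chiMap P a ∈ UP U P) ∧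
    (∀ A ∈ UP U P, ∃ a ∈ U, chiMap P a ⊆ A) ∧
    (∀ X : Set (Set (ℕ × ℕ)), X ⊆ {a | a ∈ U} → UnbddU U X →
      UnbddUP (UP U P) (chiMap P '' X)) ∧
    ((∃ f : Set (ℕ × ℕ) → Set (Set (ℕ × ℕ)),
        (∀ a ∈ U, f a ∈ UP U P) ∧
        (∀ X : Set (Set (ℕ × ℕ)), X ⊆ {a | a ∈ U} → UnbddU U X →
          UnbddUP (UP U P) (f '' X))) ∧
      (∃ g : Set (Set (ℕ × ℕ)) → Set (ℕ × ℕ),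
        (∀ A ∈ UP U P, g A ∈ U) ∧
        (∀ Y : Set (Set (Set (ℕ × ℕ))), Y ⊆ UP U P → UnbddUP (UP U P) Y →
          UnbddU U (g '' Y)))) := by

  classical
  have hmono : ∀ a b : Set (ℕ × ℕ), a ⊆ b → chiMap P a ⊆ chiMap P b := by
    intro a b hab s hs
    exact ⟨hs.1, hs.2.1, hs.2.2.trans hab⟩
  have hchiUP : ∀ a ∈ U, chiMap P a ∈ UP U P := by
    intro a ha
    exact ⟨fun s hs => hs.1, a, ha, fun s hs => hs⟩
  have hcof : ∀ A ∈ UP U P, ∃ a ∈ U, chiMap P a ⊆ A := by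
    intro A hA
    obtain ⟨-, a, ha, hsub⟩ := hA
    exact ⟨a, ha, hsub⟩
  have hunb : ∀ X : Set (Set (ℕ × ℕ)), X ⊆ {a | a ∈ U} → UnbddU U X →
      UnbddUP (UP U P) (chiMap P '' X) := by
    intro X hX hXu
    rintro ⟨B, hB, hbd⟩
    obtain ⟨b, hb, hsub⟩ := hcof B hB
    refine hXu ⟨⋃₀ chiMap P b, hunion b hb, ?_⟩
    intro a haX x hx
    obtain ⟨s, hs, hxs⟩ := hx
    have : s ∈ chiMap P a := hbd _ ⟨a, haX, rfl⟩ (hsub hs)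
    exact this.2.2 hxs
  refine ⟨fun a _ b _ hab => hmono a b hab, hchiUP, hcof, hunb, ⟨chiMap P, hchiUP, hunb⟩, ?_⟩
  set g : Set (Set (ℕ × ℕ)) → Set (ℕ × ℕ) := fun A =>
    if h : ∃ a ∈ U, chiMap P a ⊆ A then h.choose else Set.univ with hg
  have hgU : ∀ A ∈ UP U P, g A ∈ U := by
    intro A hA
    have h : ∃ a ∈ U, chiMap P a ⊆ A := hcof A hA
    simp only [hg, dif_pos h]
    exact h.choose_spec.1
  have hgsub : ∀ A ∈ UP U P, chiMap P (g A) ⊆ A := by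
    intro A hA
    have h : ∃ a ∈ U, chiMap P a ⊆ A := hcof A hA
    simp only [hg, dif_pos h]
    exact h.choose_spec.2
  refine ⟨g, hgU, ?_⟩
  intro Y hY hYu
  rintro ⟨b, hb, hbd⟩
  refine hYu ⟨chiMap P b, hchiUP b hb, ?_⟩
  intro A hA
  exact (hmono b (g A) (hbd _ ⟨A, hA, rfl⟩)).trans (hgsub A (hY hA))
end

section
/- Let U be an ultrafilter on ω×ω, let V be an ultrafilter on ω, and let φ : U → P(ω) be a monotone map cofinal in V. Suppose A ⊆ [ω×ω]^{<ω} with ∅ ∉ A and ψ : A → ω satisfy: (1) for every a ∈ U, A ∩ [a]^{<ω} ≠ ∅; (2) for every a ∈ U there exists b ∈ U with b ⊆ a such that for every s ∈ A ∩ [b]^{<ω}, ψ(s) ∈ φ(b). Let P be the set of ⊆-minimal elements of A and let f : P → ω be the restriction of ψ to P. Then for every e ⊆ ω: e ∈ V if and only if f^{-1}(e) ∈ U(P); in particular V ≤_RK U(P). -/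
/-- Given a monotone map `φ : U → P(ω)` cofinal in `V` and `A`, `ψ` as in
Theorem 3.4, the restriction `f = ψ ↾ P` to the set `P` of `⊆`-minimal members
of `A` witnesses `V ≤_RK U(P)`: for every `e ⊆ ω`, `e ∈ V ↔ f⁻¹(e) ∈ U(P)`. -/
theorem RK_reduction (U : Ultrafilter (ℕ × ℕ)) (V : Ultrafilter ℕ)
    (φ : Set (ℕ × ℕ) → Set ℕ)
    (hmono : ∀ a ∈ U, ∀ b ∈ U, a ⊆ b → φ a ⊆ φ b)
    (hφV : ∀ a ∈ U, φ a ∈ V)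
    (hcof : ∀ e ∈ V, ∃ a ∈ U, φ a ⊆ e)
    (A : Set (Set (ℕ × ℕ))) (hAfin : ∀ s ∈ A, s.Finite) (hA0 : ∅ ∉ A)
    (ψ : Set (ℕ × ℕ) → ℕ)
    (h1 : ∀ a ∈ U, ∃ s ∈ A, s ⊆ a)
    (h2 : ∀ a ∈ U, ∃ b ∈ U, b ⊆ a ∧ ∀ s ∈ A, s ⊆ b → ψ s ∈ φ b)
    (P : Set (Set (ℕ × ℕ)))
    (hP : P = {s ∈ A | ∀ t ∈ A, t ⊆ s → t = s}) :
    ∀ e : Set ℕ, e ∈ V ↔ {s ∈ P | ψ s ∈ e} ∈ UP U P := by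
  classical
  have hPsub : P ⊆ A := by rw [hP]; exact fun s hs => hs.1
  -- every member of A contains a minimal member of A
  have hmin : ∀ s ∈ A, ∃ t ∈ P, t ⊆ s := by
    intro s hs
    have hne : ∃ n, ∃ t, t ∈ A ∧ t ⊆ s ∧ t.ncard = n := ⟨s.ncard, s, hs, subset_rfl, rfl⟩
    obtain ⟨t, htA, hts, hcard⟩ := Nat.find_spec hne
    refine ⟨t, ?_, hts⟩
    rw [hP]
    refine ⟨htA, fun t' ht'A ht't => ?_⟩
    by_contra hne'
    have hss : t' ⊂ t := ssubset_of_subset_of_ne ht't hne'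
    have hlt : t'.ncard < Nat.find hne := by
      rw [← hcard]; exact Set.ncard_lt_ncard hss (hAfin t htA)
    exact Nat.find_min hne hlt ⟨t', ht'A, ht't.trans hts, rfl⟩
  have hfwd : ∀ e : Set ℕ, e ∈ V → {s ∈ P | ψ s ∈ e} ∈ UP U P := by
    intro e he
    obtain ⟨a, haU, hae⟩ := hcof e he
    obtain ⟨b, hbU, hba, hψb⟩ := h2 a haU
    refine ⟨fun s hs => hs.1, b, hbU, ?_⟩
    rintro s ⟨hsP, hsfin, hsb⟩
    exact ⟨hsP, hae (hmono b hbU a haU hba (hψb s (hPsub hsP) hsb))⟩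
  intro e
  refine ⟨hfwd e, fun h => ?_⟩
  by_contra hne
  have hec : eᶜ ∈ V := Ultrafilter.compl_mem_iff_notMem.mpr hne
  obtain ⟨-, a, haU, ha⟩ := h
  obtain ⟨-, a', ha'U, ha'⟩ := hfwd eᶜ hec
  have hbU : a ∩ a' ∈ U := U.toFilter.inter_sets haU ha'U
  obtain ⟨s₀, hs₀A, hs₀⟩ := h1 _ hbU
  obtain ⟨t, htP, hts⟩ := hmin s₀ hs₀A
  have htfin : t.Finite := hAfin t (hPsub htP)
  have htb : t ⊆ a ∩ a' := hts.trans hs₀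
  have h₁ := ha ⟨htP, htfin, htb.trans Set.inter_subset_left⟩
  have h₂ := ha' ⟨htP, htfin, htb.trans Set.inter_subset_right⟩
  exact h₂.2 h₁.2
end

section
/- Let U be a nonprincipal ultrafilter on ω×ω, let V be a nonprincipal ultrafilter on ω, and let φ : U → P(ω) be a monotone map cofinal in V. Suppose there exist A ⊆ [ω×ω]^{<ω} and ψ : A → ω such that: (1) for every a ∈ U, A ∩ [a]^{<ω} ≠ ∅; (2) for every a ∈ U there exists b ∈ U with b ⊆ a such that for every s ∈ A ∩ [b]^{<ω}, ψ(s) ∈ φ(b). Then there exists P ⊆ [ω×ω]^{<ω} \ {∅} such that: (i) P is an antichain under ⊆ (if t, s ∈ P and t ⊆ s then t = s); (ii) U(P) ≡_T U; (iii) V ≤_RK U(P). -/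
/-- `U(P)` and `U` are Tukey equivalent (as directed orders under `⊇`). -/
def TukeyEquiv (U : Ultrafilter (ℕ × ℕ)) (P : Set (Set (ℕ × ℕ))) : Prop :=
  (∃ f : Set (ℕ × ℕ) → Set (Set (ℕ × ℕ)),
      (∀ a ∈ U, f a ∈ UP U P) ∧
      (∀ X : Set (Set (ℕ × ℕ)), X ⊆ {a | a ∈ U} → UnbddU U X →
        UnbddUP (UP U P) (f '' X))) ∧
  (∃ g : Set (Set (ℕ × ℕ)) → Set (ℕ × ℕ),
      (∀ A ∈ UP U P, g A ∈ U) ∧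
      (∀ Y : Set (Set (Set (ℕ × ℕ))), Y ⊆ UP U P → UnbddUP (UP U P) Y →
        UnbddU U (g '' Y)))

/-- Theorem 3.5 (canonical form): if a monotone map `φ : U → P(ω)` cofinal in a
nonprincipal ultrafilter `V` admits `A`, `ψ` as in Theorem 3.4, then there is an
antichain `P` of nonempty finite sets with `U(P) ≡_T U` and `V ≤_RK U(P)`. -/
theorem canonical_form (U : Ultrafilter (ℕ × ℕ))
    (hUnp : ∀ s : Set (ℕ × ℕ), s.Finite → s ∉ U)
    (V : Ultrafilter ℕ) (hVnp : ∀ s : Set ℕ, s.Finite → s ∉ V)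
    (φ : Set (ℕ × ℕ) → Set ℕ)
    (hmono : ∀ a ∈ U, ∀ b ∈ U, a ⊆ b → φ a ⊆ φ b)
    (hφV : ∀ a ∈ U, φ a ∈ V)
    (hcof : ∀ e ∈ V, ∃ a ∈ U, φ a ⊆ e)
    (A : Set (Set (ℕ × ℕ))) (hAfin : ∀ s ∈ A, s.Finite)
    (ψ : Set (ℕ × ℕ) → ℕ)
    (h1 : ∀ a ∈ U, ∃ s ∈ A, s ⊆ a)
    (h2 : ∀ a ∈ U, ∃ b ∈ U, b ⊆ a ∧ ∀ s ∈ A, s ⊆ b → ψ s ∈ φ b) :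
    ∃ P : Set (Set (ℕ × ℕ)),
      (∀ s ∈ P, s.Finite) ∧ ∅ ∉ P ∧
      (∀ t ∈ P, ∀ s ∈ P, t ⊆ s → t = s) ∧
      TukeyEquiv U P ∧
      (∃ f : Set (ℕ × ℕ) → ℕ, ∀ e : Set ℕ, e ∈ V ↔ {s ∈ P | f s ∈ e} ∈ UP U P) := by
  classical
  -- cofinite sets are in V
  have hVe : ∀ n : ℕ, ({n}ᶜ : Set ℕ) ∈ V := fun n =>
    (V.mem_or_compl_mem {n}).resolve_left (hVnp _ (Set.finite_singleton n))
  -- the empty set is not in A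
  have hA0 : ∅ ∉ A := by
    intro h0
    obtain ⟨a, ha, hae⟩ := hcof ({ψ ∅}ᶜ) (hVe (ψ ∅))
    obtain ⟨b, hb, hba, hb2⟩ := h2 a ha
    exact hae (hmono b hb a ha hba (hb2 ∅ h0 (Set.empty_subset b))) rfl
  -- P: minimal nonempty elements of A
  set P : Set (Set (ℕ × ℕ)) :=
    {s | s ∈ A ∧ s.Nonempty ∧ ∀ t ∈ A, t.Nonempty → t ⊆ s → t = s} with hPdef
  have hPA : P ⊆ A := fun s hs => hs.1
  have hPfin : ∀ s ∈ P, s.Finite := fun s hs => hAfin s hs.1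
  have hPne : ∀ s ∈ P, s.Nonempty := fun s hs => hs.2.1
  -- density of P
  have hdense : ∀ a ∈ U, ∃ s ∈ P, s ⊆ a := by
    intro a ha
    obtain ⟨s, hsA, hsa⟩ := h1 a ha
    have hsne : s.Nonempty := by
      rcases Set.eq_empty_or_nonempty s with h | h
      · exact absurd (h ▸ hsA) hA0
      · exact h
    have hex : ∃ n, ∃ t, t ∈ A ∧ t.Nonempty ∧ t ⊆ s ∧ t.ncard = n :=
      ⟨s.ncard, s, hsA, hsne, subset_rfl, rfl⟩
    obtain ⟨t, htA, htne, hts, htn⟩ := Nat.find_spec hex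
    refine ⟨t, ⟨htA, htne, ?_⟩, hts.trans hsa⟩
    intro t' ht'A ht'ne ht't
    have hle : Nat.find hex ≤ t'.ncard :=
      Nat.find_min' hex ⟨t', ht'A, ht'ne, ht't.trans hts, rfl⟩
    have htfin : t.Finite := hAfin t htA
    exact Set.eq_of_subset_of_ncard_le ht't (htn ▸ hle) htfin
  -- union lemma
  have hunion : ∀ b ∈ U, (⋃₀ {s | s ∈ P ∧ s ⊆ b}) ∈ U := by
    intro b hb
    rcases U.mem_or_compl_mem (⋃₀ {s | s ∈ P ∧ s ⊆ b}) with h | h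
    · exact h
    · exfalso
      obtain ⟨s, hsP, hss⟩ := hdense _ (Filter.inter_mem hb h)
      obtain ⟨x, hx⟩ := hPne s hsP
      exact (hss hx).2 ⟨s, ⟨hsP, fun y hy => (hss hy).1⟩, hx⟩
  -- forward RK lemma
  have hfwd : ∀ e : Set ℕ, e ∈ V → ∃ b ∈ U, ∀ s ∈ P, s ⊆ b → ψ s ∈ e := by
    intro e he
    obtain ⟨a, ha, hae⟩ := hcof e he
    obtain ⟨b, hb, hba, hb2⟩ := h2 a ha
    exact ⟨b, hb, fun s hsP hsb => hae (hmono b hb a ha hba (hb2 s (hPA hsP) hsb))⟩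
  refine ⟨P, hPfin, fun h => (hPne ∅ h).ne_empty rfl,
    fun t ht s hs hts => hs.2.2 t ht.1 (hPne t ht) hts, ⟨?_, ?_⟩, ψ, ?_⟩
  · -- U ≤_T U(P)
    refine ⟨fun a => {s | s ∈ P ∧ s.Finite ∧ s ⊆ a}, ?_, ?_⟩
    · intro a ha
      exact ⟨fun s hs => hs.1, a, ha, fun s hs => hs⟩
    · intro X hX hXunb hbdd
      apply hXunb
      obtain ⟨B, ⟨hBP, b, hb, hbB⟩, hBbound⟩ := hbdd
      refine ⟨⋃₀ {s | s ∈ P ∧ s ⊆ b}, hunion b hb, ?_⟩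
      intro a ha x hx
      obtain ⟨s, ⟨hsP, hsb⟩, hxs⟩ := hx
      have hBa : B ⊆ {t | t ∈ P ∧ t.Finite ∧ t ⊆ a} := hBbound _ ⟨a, ha, rfl⟩
      exact (hBa (hbB ⟨hsP, hPfin s hsP, hsb⟩)).2.2 hxs
  · -- U(P) ≤_T U
    refine ⟨fun B => if h : ∃ a ∈ U, {s ∈ P | s.Finite ∧ s ⊆ a} ⊆ B
        then h.choose else Set.univ, ?_, ?_⟩
    · intro B hB
      simp only [dif_pos hB.2]
      exact hB.2.choose_spec.1
    · intro Y hY hYunb hbdd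
      apply hYunb
      obtain ⟨c, hc, hcb⟩ := hbdd
      refine ⟨{s | s ∈ P ∧ s.Finite ∧ s ⊆ c}, ⟨fun s hs => hs.1, c, hc, fun s hs => hs⟩, ?_⟩
      intro B hBY s hs
      have hex := (hY hBY).2
      have hcB : c ⊆ hex.choose := by
        have h := hcb _ ⟨B, hBY, rfl⟩
        simpa only [dif_pos hex] using h
      exact hex.choose_spec.2 ⟨hs.1, hs.2.1, hs.2.2.trans hcB⟩
  · -- Rudin–Keisler
    intro e
    constructor
    · intro he
      obtain ⟨b, hb, hbe⟩ := hfwd e he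
      exact ⟨fun s hs => hs.1, b, hb, fun s hs => ⟨hs.1, hbe s hs.1 hs.2.2⟩⟩
    · intro hmem
      by_contra hne
      obtain ⟨b', hb', hbe'⟩ := hfwd eᶜ ((V.mem_or_compl_mem e).resolve_left hne)
      obtain ⟨hsub, b, hb, hbB⟩ := hmem
      obtain ⟨s, hsP, hss⟩ := hdense (b ∩ b') (Filter.inter_mem hb hb')
      exact hbe' s hsP (fun x hx => (hss hx).2)
        (hbB ⟨hsP, hPfin s hsP, fun x hx => (hss hx).1⟩).2
end

section
/- Let α be a countable ordinal with α > 0, and let ⟨x_ξ : ξ < α⟩ and ⟨p_ξ : ξ < α⟩ be sequences of subsets of ω×ω such that: (a) each p_ξ is a standard (FIN×FIN)-positive set and p_ξ ⊆ x_ξ; (b) for all ζ < ξ < α, x_ξ \ p_ζ ∈ FIN×FIN; (c) for every ξ < α and every n ∈ ω, the set {ζ < ξ : (x_ξ ∩ x_ζ)(n) is infinite} is finite; (d) for every ξ < α and every n ∈ dom(p_ξ), the ideal on p_ξ(n) generated by the finite subsets of p_ξ(n) together with the sets {p_ξ(n) ∩ x_ζ(n) : ζ < α and ζ ∉ F(ξ,n)}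 is a proper ideal on p_ξ(n), where F(ξ,n) = {ζ ≤ ξ : p_ξ(n) \ x_ζ(n) is finite}. Then there exists a (FIN×FIN)-positive set p ⊆ ω×ω such that p \ p_ξ ∈ FIN×FIN for every ξ < α, and for every m ∈ ω the set {ξ < α : (p ∩ x_ξ)(m) is infinite} is finite. -/
/-- The ideal FIN × FIN : all but finitely many columns are finite. -/
def finTimesFin : Set (Set (ℕ × ℕ)) := {p | {n | (col p n).Infinite}.Finite}

/-- `p` is (FIN×FIN)-positive. -/
def IsPositive (p : Set (ℕ × ℕ)) : Prop := p ∉ finTimesFin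

/-- `p` is a standard positive set. -/
def IsStandard (p : Set (ℕ × ℕ)) : Prop :=
  IsPositive p ∧ ∀ n ∈ domp p, (col p n).Infinite

/-- `F(ξ, n)` from the proof of Theorem 3.7: those `ζ ≤ ξ` with
`p_ξ(n) ⊆* x_ζ(n)`. -/
def Fset (p x : Ordinal → Set (ℕ × ℕ)) (ξ : Ordinal) (n : ℕ) : Set Ordinal :=
  {ζ | ζ ≤ ξ ∧ (col (p ξ) n \ col (x ζ) n).Finite}

lemma col_diff (a b : Set (ℕ × ℕ)) (n : ℕ) : col (a \ b) n = col a n \ col b n := rfl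

lemma col_inter (a b : Set (ℕ × ℕ)) (n : ℕ) : col (a ∩ b) n = col a n ∩ col b n := rfl

lemma Ordinal.countable_Iio {α : Ordinal} (h : α.card ≤ Cardinal.aleph0) :
    (Set.Iio α).Countable := by
  rw [← Cardinal.le_aleph0_iff_set_countable, Cardinal.mk_Iio_ordinal]
  exact Cardinal.lift_le_aleph0.2 h

lemma partialSups_lt_iff {ι β : Type*} [Preorder ι] [LocallyFiniteOrderBot ι] [LinearOrder β]
    {f : ι → β} {i : ι} {b : β} : partialSups f i < b ↔ ∀ j ≤ i, f j < b :=
  partialSups_iff_forall (· < b) sup_lt_iff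

lemma exists_infinite_subset_forall_inter_finite {ι : Type*} [Countable ι] {A : Set ℕ}
    {B : ι → Set ℕ} (h : ∀ G : Set ι, G.Finite → (A \ ⋃ i ∈ G, B i).Infinite) :
    ∃ S ⊆ A, S.Infinite ∧ ∀ i, (S ∩ B i).Finite := by
  obtain ⟨f, hf⟩ := Countable.exists_injective_nat ι
  have hG : ∀ j, (f ⁻¹' Set.Iic j).Finite := fun j => (Set.finite_Iic j).preimage hf.injOn
  obtain ⟨a, ha, haA⟩ := Filter.extraction_forall_of_frequently fun j =>
    Nat.frequently_atTop_iff_infinite.2 (h _ (hG j))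
  refine ⟨Set.range a, Set.range_subset_iff.2 fun j => (haA j).1,
    Set.infinite_range_of_injective ha.injective, fun i => ?_⟩
  refine ((Set.finite_Iio (f i)).image a).subset ?_
  rintro _ ⟨⟨j, rfl⟩, hj⟩
  by_contra hji
  exact (haA j).2 (Set.mem_biUnion (show f i ≤ j from not_lt.1 fun h => hji ⟨j, h, rfl⟩) hj)

lemma finTimesFin_mono {a b : Set (ℕ × ℕ)} (hab : a ⊆ b) (hb : b ∈ finTimesFin) :
    a ∈ finTimesFin :=
  hb.subset fun _ hn => hn.mono fun _ hm => hab hm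

lemma IsPositive.infinite_setOf_col_diff_finite {P : Set (ℕ × ℕ)} (hP : IsPositive P)
    {ι : Type*} {s : Set ι} (hs : s.Finite) {R : ι → Set (ℕ × ℕ)}
    (hR : ∀ i ∈ s, P \ R i ∈ finTimesFin) :
    {n | (col P n).Infinite ∧ ∀ i ∈ s, (col P n \ col (R i) n).Finite}.Infinite := by
  refine (Set.Infinite.sdiff hP (hs.biUnion hR)).mono ?_
  rintro n ⟨hn, hbad⟩
  exact ⟨hn, fun i hi => Set.not_infinite.1 fun h => hbad (Set.mem_biUnion hi h)⟩

def ofColumns (n : ℕ → ℕ) (S : ℕ → Set ℕ) : Set (ℕ × ℕ) := ⋃ k, {n k} ×ˢ S k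

section ofColumns

variable {n : ℕ → ℕ} {S : ℕ → Set ℕ}

lemma col_ofColumns_apply (hn : n.Injective) (k : ℕ) : col (ofColumns n S) (n k) = S k := by
  ext m
  simp [col, ofColumns, hn.eq_iff]

lemma col_ofColumns_of_notMem {m : ℕ} (hm : m ∉ Set.range n) : col (ofColumns n S) m = ∅ := by
  ext m'
  simp only [col, ofColumns, Set.mem_ofPred_eq, Set.mem_iUnion, Set.mem_prod,
    Set.mem_singleton_iff, Set.mem_empty_iff_false, iff_false, not_exists, not_and]
  exact fun k hk => absurd ⟨k, hk.symm⟩ hm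

lemma isPositive_ofColumns (hn : n.Injective) (hS : ∀ k, (S k).Infinite) :
    IsPositive (ofColumns n S) := fun hfin =>
  Set.infinite_range_of_injective hn <| hfin.subset <| Set.range_subset_iff.2 fun k => by
    simpa [col_ofColumns_apply hn] using hS k

lemma ofColumns_diff_mem_finTimesFin (hn : n.Injective) {r : Set (ℕ × ℕ)}
    (h : {k | (S k \ col r (n k)).Infinite}.Finite) : ofColumns n S \ r ∈ finTimesFin := by
  refine (h.image n).subset fun m hm => ?_
  by_cases hmn : m ∈ Set.range n
  · obtain ⟨k, rfl⟩ := hmn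
    exact ⟨k, by simpa [col_diff, col_ofColumns_apply hn] using hm, rfl⟩
  · exact absurd (by simp [col_diff, col_ofColumns_of_notMem hmn]) hm

lemma finite_setOf_col_ofColumns_inter_infinite (hn : n.Injective) {ι : Type*} {P : ι → Prop}
    {X : ι → Set (ℕ × ℕ)} (h : ∀ k, {i | P i ∧ (S k ∩ col (X i) (n k)).Infinite}.Finite)
    (m : ℕ) : {i | P i ∧ (col (ofColumns n S ∩ X i) m).Infinite}.Finite := by
  by_cases hmn : m ∈ Set.range n
  · obtain ⟨k, rfl⟩ := hmn
    simpa [col_inter, col_ofColumns_apply hn] using h k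
  · simp [col_inter, col_ofColumns_of_notMem hmn]

end ofColumns

section Fset

variable {p x : Ordinal → Set (ℕ × ℕ)} {ξ : Ordinal} {n : ℕ}

lemma Fset_finite (hpx : p ξ ⊆ x ξ) (hn : (col (p ξ) n).Infinite)
    (hc : {ζ | ζ < ξ ∧ (col (x ξ ∩ x ζ) n).Infinite}.Finite) : (Fset p x ξ n).Finite := by
  refine (hc.insert ξ).subset ?_
  rintro ζ ⟨hζξ, hfin⟩
  rcases hζξ.eq_or_lt with rfl | hζξ
  · exact Set.mem_insert _ _
  · refine Or.inr ⟨hζξ, (hn.sdiff hfin).mono ?_⟩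
    rw [Set.sdiff_sdiff_right_self]
    exact Set.inter_subset_inter_left _ fun _ hm => hpx hm

lemma exists_infinite_subset_col_finite_setOf_inter_infinite {α : Ordinal}
    (hα : (Set.Iio α).Countable) (hpx : p ξ ⊆ x ξ) (hn : (col (p ξ) n).Infinite)
    (hc : {ζ | ζ < ξ ∧ (col (x ξ ∩ x ζ) n).Infinite}.Finite)
    (hd : ∀ G : Set Ordinal, G.Finite → (∀ ζ ∈ G, ζ < α ∧ ζ ∉ Fset p x ξ n) →
      (col (p ξ) n \ ⋃ ζ ∈ G, (col (p ξ) n ∩ col (x ζ) n)).Infinite) :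
    ∃ S ⊆ col (p ξ) n, S.Infinite ∧ {ζ | ζ < α ∧ (S ∩ col (x ζ) n).Infinite}.Finite := by
  let I : Set Ordinal := {ζ | ζ < α ∧ ζ ∉ Fset p x ξ n}
  have : Countable I := (hα.mono fun _ hζ => hζ.1).to_subtype
  obtain ⟨S, hSp, hS, hSx⟩ := exists_infinite_subset_forall_inter_finite
    (A := col (p ξ) n) (B := fun ζ : I => col (x ζ) n) fun G hG => by
      refine (hd _ (hG.image Subtype.val) ?_).mono ?_
      · rintro _ ⟨ζ, -, rfl⟩
        exact ζ.2
      · rintro m ⟨hmp, hm⟩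
        refine ⟨hmp, fun hmx => hm ?_⟩
        obtain ⟨ζ, hζ, hmζ⟩ := Set.mem_iUnion₂.1 hmx
        exact Set.mem_biUnion (Set.mem_image_of_mem _ hζ) ⟨hmp, hmζ⟩
  refine ⟨S, hSp, hS, (Fset_finite hpx hn hc).subset fun ζ hζ => ?_⟩
  by_contra hζF
  exact hζ.2 (hSx ⟨ζ, hζ.1, hζF⟩)

end Fset

/-- The successor step in the construction of Theorem 3.7: given sequences of
length a countable ordinal `α > 0` satisfying (a)-(d), there is a positive `p`
below every `p_ξ` whose intersection with each `x_ξ` has, for each column `m`,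
only finitely many `ξ < α` giving an infinite column. -/
theorem successor_step (α : Ordinal) (hα0 : 0 < α) (hαctble : α.card ≤ Cardinal.aleph0)
    (x p : Ordinal → Set (ℕ × ℕ))
    (ha : ∀ ξ < α, IsStandard (p ξ) ∧ p ξ ⊆ x ξ)
    (hb : ∀ ζ ξ : Ordinal, ζ < ξ → ξ < α → x ξ \ p ζ ∈ finTimesFin)
    (hc : ∀ ξ < α, ∀ n : ℕ, {ζ : Ordinal | ζ < ξ ∧ (col (x ξ ∩ x ζ) n).Infinite}.Finite)
    (hd : ∀ ξ < α, ∀ n ∈ domp (p ξ), ∀ G : Set Ordinal, G.Finite →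
      (∀ ζ ∈ G, ζ < α ∧ ζ ∉ Fset p x ξ n) →
      (col (p ξ) n \ ⋃ ζ ∈ G, (col (p ξ) n ∩ col (x ζ) n)).Infinite) :
    ∃ q : Set (ℕ × ℕ), IsPositive q ∧
      (∀ ξ < α, q \ p ξ ∈ finTimesFin) ∧
      (∀ m : ℕ, {ξ : Ordinal | ξ < α ∧ (col (q ∩ x ξ) m).Infinite}.Finite) := by
  have hα : (Set.Iio α).Countable := Ordinal.countable_Iio hαctble
  obtain ⟨e, he⟩ := hα.exists_eq_range ⟨0, hα0⟩
  have he_lt : ∀ j, e j < α := fun j => (he ▸ Set.mem_range_self j : e j ∈ Set.Iio α)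
  set ξ := partialSups e
  have hξ : ∀ k, ξ k < α := fun k => partialSups_lt_iff.2 fun j _ => he_lt j
  have hξe : ∀ k, ∀ j ∈ Set.Iic k, p (ξ k) \ p (e j) ∈ finTimesFin := fun k j hjk => by
    rcases (le_partialSups_of_le e hjk).lt_or_eq with hlt | heq
    · exact finTimesFin_mono (Set.sdiff_subset_sdiff_left (ha _ (hξ k)).2) (hb _ _ hlt (hξ k))
    · simp [heq, ξ, finTimesFin, col]
  obtain ⟨n, hn, hn_col⟩ := Filter.extraction_forall_of_frequently fun k =>
    Nat.frequently_atTop_iff_infinite.2 <|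
      (ha _ (hξ k)).1.1.infinite_setOf_col_diff_finite (Set.finite_Iic k) (hξe k)
  choose S hS_sub hS_inf hS_fin using fun k =>
    exists_infinite_subset_col_finite_setOf_inter_infinite hα (ha _ (hξ k)).2 (hn_col k).1
      (hc _ (hξ k) _) (hd _ (hξ k) _ (hn_col k).1.nonempty.ne_empty)
  refine ⟨ofColumns n S, isPositive_ofColumns hn.injective hS_inf, fun ζ hζ => ?_,
    finite_setOf_col_ofColumns_inter_infinite (P := (· < α)) hn.injective hS_fin⟩
  obtain ⟨j, rfl⟩ : ζ ∈ Set.range e := he ▸ hζ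
  refine ofColumns_diff_mem_finTimesFin hn.injective ((Set.finite_Iio j).subset fun k hk => ?_)
  by_contra hjk
  exact hk (((hn_col k).2 j (not_lt.1 hjk : j ≤ k)).subset
    (Set.sdiff_subset_sdiff_left (hS_sub k)))
end
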